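/- Let G = (V,E) be a graph and V = V₁ ∪ ... ∪ V_k a partition such that (1) for each i, either |V_i| = 1 or G[V_i] is a φ-expander; (2) for each i with |V_i| > 1 and each v ∈ V_i, |E({v}, V_i)| ≥ deg(v)/d; and (3) for each i ∈ {2,...,k}, |E(V₁, V_i)| ≥ ε·vol(V_i). Then G is a φ'-expander with φ' = εφ/(6d). -/
import Mathlib
set_option linter.unusedSectionVars false
set_option maxHeartbeats 1000000


open Finset

/-- Number of ordered adjacent pairs `(a, b)` with `a ∈ A`, `b ∈ B`.  For disjoint
`A`, `B` this equals `|E(A,B)|`. -/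
def eB {V : Type*} [DecidableEq V] (G : SimpleGraph V) [DecidableRel G.Adj]
    (A B : Finset V) : ℕ :=
  ((A ×ˢ B).filter fun p => G.Adj p.1 p.2).card

/-- The volume of a vertex set: sum of degrees in `G`. -/
def vol {V : Type*} [Fintype V] [DecidableEq V] (G : SimpleGraph V) [DecidableRel G.Adj]
    (S : Finset V) : ℕ :=
  ∑ v ∈ S, G.degree v

section helpers

variable {V : Type*} [Fintype V] [DecidableEq V] {G : SimpleGraph V} [DecidableRel G.Adj]

lemma eB_eq_sum (A B : Finset V) :
    eB G A B = ∑ a ∈ A, ∑ b ∈ B, if G.Adj a b then 1 else 0 := by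
  rw [eB, Finset.card_filter, Finset.sum_product]

lemma eB_comm (A B : Finset V) : eB G A B = eB G B A := by
  rw [eB_eq_sum, eB_eq_sum, Finset.sum_comm]
  exact Finset.sum_congr rfl fun b _ => Finset.sum_congr rfl fun a _ =>
    if_congr (G.adj_comm a b) rfl rfl

lemma eB_mono {A A' B B' : Finset V} (hA : A ⊆ A') (hB : B ⊆ B') :
    eB G A B ≤ eB G A' B' := by
  rw [eB_eq_sum, eB_eq_sum]
  refine le_trans (Finset.sum_le_sum fun a _ => ?_) (Finset.sum_le_sum_of_subset hA)
  exact Finset.sum_le_sum_of_subset hB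

lemma eB_union_left {A A' : Finset V} (h : Disjoint A A') (B : Finset V) :
    eB G (A ∪ A') B = eB G A B + eB G A' B := by
  rw [eB_eq_sum, eB_eq_sum, eB_eq_sum, Finset.sum_union h]

lemma eB_union_right (A : Finset V) {B B' : Finset V} (h : Disjoint B B') :
    eB G A (B ∪ B') = eB G A B + eB G A B' := by
  rw [eB_comm, eB_union_left h, eB_comm A B, eB_comm A B']

lemma degree_eq (v : V) :
    G.degree v = ∑ b ∈ univ, if G.Adj v b then 1 else 0 := by
  rw [← SimpleGraph.card_neighborFinset_eq_degree, SimpleGraph.neighborFinset_eq_filter,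
    Finset.card_filter]

lemma eB_le_vol_right (A B : Finset V) : eB G A B ≤ vol G B := by
  rw [eB_eq_sum, vol, Finset.sum_comm]
  refine Finset.sum_le_sum fun b _ => ?_
  rw [degree_eq b]
  refine le_trans (le_of_eq ?_) (Finset.sum_le_sum_of_subset (Finset.subset_univ A))
  exact Finset.sum_congr rfl fun a _ => if_congr (G.adj_comm a b) rfl rfl

lemma eB_le_vol_left (A B : Finset V) : eB G A B ≤ vol G A := by
  rw [eB_comm]; exact eB_le_vol_right B A

variable {k : ℕ} {P : Fin k → Finset V}

lemma sum_part (hdisj : ∀ i j, i ≠ j → Disjoint (P i) (P j))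
    (hcover : ∀ v : V, ∃ i, v ∈ P i) (f : V → ℕ) (X : Finset V) :
    ∑ i, ∑ v ∈ X ∩ P i, f v = ∑ v ∈ X, f v := by
  calc ∑ i, ∑ v ∈ X ∩ P i, f v
      = ∑ i, ∑ v ∈ X, if v ∈ P i then f v else 0 := by
        refine Finset.sum_congr rfl fun i _ => ?_
        rw [← Finset.filter_mem_eq_inter, Finset.sum_filter]
    _ = ∑ v ∈ X, ∑ i, if v ∈ P i then f v else 0 := Finset.sum_comm
    _ = ∑ v ∈ X, f v := by
        refine Finset.sum_congr rfl fun v _ => ?_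
        obtain ⟨j, hj⟩ := hcover v
        rw [Finset.sum_eq_single j
          (fun i _ hij => if_neg fun hv => (Finset.disjoint_left.mp (hdisj i j hij)) hv hj)
          (fun h => absurd (Finset.mem_univ j) h)]
        exact if_pos hj

lemma vol_part (hdisj : ∀ i j, i ≠ j → Disjoint (P i) (P j))
    (hcover : ∀ v : V, ∃ i, v ∈ P i) (X : Finset V) :
    ∑ i, vol G (X ∩ P i) = vol G X :=
  sum_part hdisj hcover (fun v => G.degree v) X

lemma eB_part_right (hdisj : ∀ i j, i ≠ j → Disjoint (P i) (P j))
    (hcover : ∀ v : V, ∃ i, v ∈ P i) (C X : Finset V) (T : Finset (Fin k)) :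
    ∑ i ∈ T, eB G C (X ∩ P i) ≤ eB G C X := by
  calc ∑ i ∈ T, eB G C (X ∩ P i)
      ≤ ∑ i, eB G C (X ∩ P i) := Finset.sum_le_sum_of_subset (Finset.subset_univ T)
    _ = ∑ i, eB G (X ∩ P i) C := Finset.sum_congr rfl fun i _ => eB_comm _ _
    _ = eB G X C := by
        simp_rw [eB_eq_sum]
        exact sum_part hdisj hcover _ X
    _ = eB G C X := eB_comm _ _

lemma vol_mono {A B : Finset V} (h : A ⊆ B) : vol G A ≤ vol G B :=
  Finset.sum_le_sum_of_subset h

end helpers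

lemma aux {V : Type*} [Fintype V] [DecidableEq V]
    (G : SimpleGraph V) [DecidableRel G.Adj]
    (ε φ d : ℝ) (hε0 : 0 ≤ ε) (hε1 : ε ≤ 1) (hφ0 : 0 ≤ φ) (hφ1 : φ ≤ 1) (hd : 1 ≤ d)
    (k : ℕ) (hk : 0 < k) (P : Fin k → Finset V)
    (hdisj : ∀ i j, i ≠ j → Disjoint (P i) (P j))
    (hcover : ∀ v : V, ∃ i, v ∈ P i)
    (h1 : ∀ i, (P i).card = 1 ∨
      ∀ S ⊆ P i, S.Nonempty → S ≠ P i →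
        φ * min (∑ v ∈ S, (eB G {v} (P i) : ℝ)) (∑ v ∈ P i \ S, (eB G {v} (P i) : ℝ))
          ≤ (eB G S (P i \ S) : ℝ))
    (h2 : ∀ i, 1 < (P i).card → ∀ v ∈ P i,
      (G.degree v : ℝ) ≤ d * (eB G {v} (P i) : ℝ))
    (h3 : ∀ i, i ≠ (⟨0, hk⟩ : Fin k) →
      ε * (vol G (P i) : ℝ) ≤ (eB G (P ⟨0, hk⟩) (P i) : ℝ))
    (S : Finset V) (hvol : vol G S ≤ vol G Sᶜ) :
    ε * φ / (6 * d) * (vol G S : ℝ) ≤ (eB G S Sᶜ : ℝ) := by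
  classical
  set i0 : Fin k := ⟨0, hk⟩ with hi0def
  have hd0 : (0:ℝ) < d := lt_of_lt_of_le one_pos hd
  have h6d : (0:ℝ) < 6 * d := by positivity
  rw [div_mul_eq_mul_div, div_le_iff₀ h6d]
  have he0 : (0:ℝ) ≤ (eB G S Sᶜ : ℝ) := Nat.cast_nonneg _
  have hvS0 : (0:ℝ) ≤ (vol G S : ℝ) := Nat.cast_nonneg _
  have hvolR : (vol G S : ℝ) ≤ (vol G Sᶜ : ℝ) := by exact_mod_cast hvol
  -- set identities
  have hBS : ∀ i : Fin k, Sᶜ ∩ P i = P i \ S := by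
    intro i; ext v
    simp only [Finset.mem_compl, Finset.mem_inter, Finset.mem_sdiff]; tauto
  have hPsplit : ∀ i : Fin k, P i = (S ∩ P i) ∪ (P i \ S) := by
    intro i; ext v
    simp only [Finset.mem_union, Finset.mem_inter, Finset.mem_sdiff]; tauto
  have hABdisj : ∀ i : Fin k, Disjoint (S ∩ P i) (P i \ S) := by
    intro i; rw [Finset.disjoint_left]; intro v hv hv'
    exact (Finset.mem_sdiff.mp hv').2 (Finset.mem_inter.mp hv).1
  have hdiffeq : ∀ i : Fin k, P i \ (S ∩ P i) = P i \ S := by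
    intro i; ext v; simp only [Finset.mem_sdiff, Finset.mem_inter]; tauto
  -- sum of internal crossing edges
  have hsum_ee : ∑ i, (eB G (S ∩ P i) (P i \ S) : ℝ) ≤ (eB G S Sᶜ : ℝ) := by
    have hn : ∑ i, eB G (S ∩ P i) (P i \ S) ≤ eB G S Sᶜ := by
      calc ∑ i, eB G (S ∩ P i) (P i \ S)
          ≤ ∑ i, eB G S (Sᶜ ∩ P i) := Finset.sum_le_sum fun i _ => by
            rw [hBS i]; exact eB_mono Finset.inter_subset_left (subset_refl _)
        _ ≤ eB G S Sᶜ := eB_part_right (G := G) hdisj hcover S Sᶜ Finset.univ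
    exact_mod_cast hn
  have hEsub : ∀ T : Finset (Fin k),
      ∑ i ∈ T, (eB G (S ∩ P i) (P i \ S) : ℝ) ≤ (eB G S Sᶜ : ℝ) := fun T =>
    le_trans (Finset.sum_le_sum_of_subset_of_nonneg (Finset.subset_univ T)
      (fun i _ _ => Nat.cast_nonneg _)) hsum_ee
  have hEi : ∀ i, (eB G (S ∩ P i) (P i \ S) : ℝ) ≤ (eB G S Sᶜ : ℝ) := by
    intro i
    have h := hEsub {i}
    rwa [Finset.sum_singleton] at h
  -- volumes partition
  have hvolS : (vol G S : ℝ) = ∑ i, (vol G (S ∩ P i) : ℝ) := by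
    exact_mod_cast (vol_part (G := G) hdisj hcover S).symm
  have hvolSc : (vol G Sᶜ : ℝ) = ∑ i, (vol G (P i \ S) : ℝ) := by
    have hn := (vol_part (G := G) hdisj hcover Sᶜ).symm
    simp_rw [hBS] at hn
    exact_mod_cast hn
  -- dichotomy
  have hF3 : ∀ i : Fin k,
      φ * (vol G (S ∩ P i) : ℝ) ≤ d * (eB G (S ∩ P i) (P i \ S) : ℝ) ∨
      φ * (vol G (P i \ S) : ℝ) ≤ d * (eB G (S ∩ P i) (P i \ S) : ℝ) := by
    intro i
    have hee0 : (0:ℝ) ≤ (eB G (S ∩ P i) (P i \ S) : ℝ) := Nat.cast_nonneg _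
    by_cases hA : S ∩ P i = ∅
    · left; rw [hA]; simp [vol]; positivity
    by_cases hB : P i \ S = ∅
    · right; rw [hB]; simp [vol]; positivity
    obtain ⟨u, hu⟩ := Finset.nonempty_iff_ne_empty.mpr hA
    obtain ⟨w, hw⟩ := Finset.nonempty_iff_ne_empty.mpr hB
    have huP := (Finset.mem_inter.mp hu).2
    have huS := (Finset.mem_inter.mp hu).1
    have hwP := (Finset.mem_sdiff.mp hw).1
    have hwS := (Finset.mem_sdiff.mp hw).2
    have hcard : 1 < (P i).card :=
      Finset.one_lt_card.mpr ⟨u, huP, w, hwP, fun h => hwS (h ▸ huS)⟩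
    have hmin : φ * min (∑ v ∈ S ∩ P i, (eB G {v} (P i) : ℝ))
        (∑ v ∈ P i \ S, (eB G {v} (P i) : ℝ)) ≤ (eB G (S ∩ P i) (P i \ S) : ℝ) := by
      rcases h1 i with hc | hexp
      · exact absurd hc (by omega)
      · have hne : S ∩ P i ≠ P i := by
          intro hEq
          have hw' := hwP
          rw [← hEq] at hw'
          exact hwS (Finset.mem_inter.mp hw').1
        have h := hexp (S ∩ P i) Finset.inter_subset_right ⟨u, hu⟩ hne
        rwa [hdiffeq i] at h
    have hvA : (vol G (S ∩ P i) : ℝ) ≤ d * ∑ v ∈ S ∩ P i, (eB G {v} (P i) : ℝ) := by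
      rw [vol]; push_cast; rw [Finset.mul_sum]
      exact Finset.sum_le_sum fun v hv => h2 i hcard v (Finset.mem_inter.mp hv).2
    have hvB : (vol G (P i \ S) : ℝ) ≤ d * ∑ v ∈ P i \ S, (eB G {v} (P i) : ℝ) := by
      rw [vol]; push_cast; rw [Finset.mul_sum]
      exact Finset.sum_le_sum fun v hv => h2 i hcard v (Finset.mem_sdiff.mp hv).1
    rcases le_total (∑ v ∈ S ∩ P i, (eB G {v} (P i) : ℝ))
      (∑ v ∈ P i \ S, (eB G {v} (P i) : ℝ)) with hab | hab
    · left
      rw [min_eq_left hab] at hmin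
      nlinarith [mul_le_mul_of_nonneg_left hvA hφ0, mul_le_mul_of_nonneg_left hmin hd0.le]
    · right
      rw [min_eq_right hab] at hmin
      nlinarith [mul_le_mul_of_nonneg_left hvB hφ0, mul_le_mul_of_nonneg_left hmin hd0.le]
  -- the two classes
  set L : Finset (Fin k) := Finset.univ.filter
    (fun i => φ * (vol G (S ∩ P i) : ℝ) ≤ d * (eB G (S ∩ P i) (P i \ S) : ℝ)) with hLdef
  set R : Finset (Fin k) := Finset.univ.filter
    (fun i => ¬ (φ * (vol G (S ∩ P i) : ℝ) ≤ d * (eB G (S ∩ P i) (P i \ S) : ℝ))) with hRdef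
  have hLmem : ∀ i ∈ L, φ * (vol G (S ∩ P i) : ℝ) ≤ d * (eB G (S ∩ P i) (P i \ S) : ℝ) :=
    fun i hi => (Finset.mem_filter.mp hi).2
  have hRmem : ∀ i ∈ R, φ * (vol G (P i \ S) : ℝ) ≤ d * (eB G (S ∩ P i) (P i \ S) : ℝ) := by
    intro i hi
    exact (hF3 i).resolve_left (Finset.mem_filter.mp hi).2
  have hLR : ∀ f : Fin k → ℝ, ∑ i ∈ L, f i + ∑ i ∈ R, f i = ∑ i, f i := by
    intro f; rw [hLdef, hRdef]
    exact Finset.sum_filter_add_sum_filter_not Finset.univ _ f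
  -- generic bounds used in the center argument
  have hA0P : ∀ T : Finset (Fin k),
      ∑ i ∈ T, (eB G (S ∩ P i0) (P i) : ℝ) ≤ (vol G (S ∩ P i0) : ℝ) := by
    intro T
    have hn : ∑ i ∈ T, eB G (S ∩ P i0) (P i) ≤ vol G (S ∩ P i0) := by
      refine le_trans ?_ (eB_le_vol_left (S ∩ P i0) Finset.univ)
      have hn2 := eB_part_right (G := G) hdisj hcover (S ∩ P i0) Finset.univ T
      simpa [Finset.univ_inter] using hn2
    exact_mod_cast hn
  have hB0P : ∀ T : Finset (Fin k),
      ∑ i ∈ T, (eB G (P i0 \ S) (P i) : ℝ) ≤ (vol G (P i0 \ S) : ℝ) := by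
    intro T
    have hn : ∑ i ∈ T, eB G (P i0 \ S) (P i) ≤ vol G (P i0 \ S) := by
      refine le_trans ?_ (eB_le_vol_left (P i0 \ S) Finset.univ)
      have hn2 := eB_part_right (G := G) hdisj hcover (P i0 \ S) Finset.univ T
      simpa [Finset.univ_inter] using hn2
    exact_mod_cast hn
  have hB0sub : P i0 \ S ⊆ Sᶜ := by rw [← hBS i0]; exact Finset.inter_subset_left
  have hcrossBA : ∀ T : Finset (Fin k),
      ∑ i ∈ T, (eB G (P i0 \ S) (S ∩ P i) : ℝ) ≤ (eB G S Sᶜ : ℝ) := by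
    intro T
    have hn : ∑ i ∈ T, eB G (P i0 \ S) (S ∩ P i) ≤ eB G S Sᶜ := by
      calc ∑ i ∈ T, eB G (P i0 \ S) (S ∩ P i)
          ≤ eB G (P i0 \ S) S := eB_part_right (G := G) hdisj hcover _ S T
        _ ≤ eB G Sᶜ S := eB_mono hB0sub (subset_refl S)
        _ = eB G S Sᶜ := eB_comm _ _
    exact_mod_cast hn
  have hcrossAB : ∀ T : Finset (Fin k),
      ∑ i ∈ T, (eB G (S ∩ P i0) (P i \ S) : ℝ) ≤ (eB G S Sᶜ : ℝ) := by
    intro T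
    have hn : ∑ i ∈ T, eB G (S ∩ P i0) (P i \ S) ≤ eB G S Sᶜ := by
      calc ∑ i ∈ T, eB G (S ∩ P i0) (P i \ S)
          = ∑ i ∈ T, eB G (S ∩ P i0) (Sᶜ ∩ P i) := by
            refine Finset.sum_congr rfl fun i _ => ?_; rw [hBS i]
        _ ≤ eB G (S ∩ P i0) Sᶜ := eB_part_right (G := G) hdisj hcover _ Sᶜ T
        _ ≤ eB G S Sᶜ := eB_mono Finset.inter_subset_left (subset_refl _)
    exact_mod_cast hn
  -- decompositions of eB (P i0) (P i)
  have hsplitR : ∀ (X : Finset V) (i : Fin k),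
      eB G X (P i) = eB G X (S ∩ P i) + eB G X (P i \ S) := by
    intro X i
    conv_lhs => rw [hPsplit i]
    exact eB_union_right X (hABdisj i)
  have hsplitL : ∀ Y : Finset V,
      eB G (P i0) Y = eB G (S ∩ P i0) Y + eB G (P i0 \ S) Y := by
    intro Y
    conv_lhs => rw [hPsplit i0]
    exact eB_union_left (hABdisj i0) Y
  have hdec : ∀ i : Fin k, (eB G (P i0) (P i) : ℝ) =
      (eB G (S ∩ P i0) (P i) : ℝ) + ((eB G (P i0 \ S) (S ∩ P i) : ℝ)
        + (eB G (P i0 \ S) (P i \ S) : ℝ)) := by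
    intro i
    have hn : eB G (P i0) (P i) =
        eB G (S ∩ P i0) (P i) + (eB G (P i0 \ S) (S ∩ P i) + eB G (P i0 \ S) (P i \ S)) := by
      rw [hsplitL (P i), hsplitR (P i0 \ S) i]
    exact_mod_cast congrArg (fun n : ℕ => (n : ℝ)) hn
  have hdec2 : ∀ i : Fin k, (eB G (P i0) (P i) : ℝ) =
      ((eB G (S ∩ P i0) (S ∩ P i) : ℝ) + (eB G (S ∩ P i0) (P i \ S) : ℝ))
        + (eB G (P i0 \ S) (P i) : ℝ) := by
    intro i
    have hn : eB G (P i0) (P i) =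
        (eB G (S ∩ P i0) (S ∩ P i) + eB G (S ∩ P i0) (P i \ S)) + eB G (P i0 \ S) (P i) := by
      rw [hsplitL (P i), hsplitR (S ∩ P i0) i]
    exact_mod_cast congrArg (fun n : ℕ => (n : ℝ)) hn
  -- main case analysis
  by_cases hc1 : (vol G S : ℝ) ≤ 2 * ∑ i ∈ L, (vol G (S ∩ P i) : ℝ)
  · -- Case 1: mass concentrated in internally-good parts
    have step : ∑ i ∈ L, φ * (vol G (S ∩ P i) : ℝ) ≤ d * (eB G S Sᶜ : ℝ) := by
      calc ∑ i ∈ L, φ * (vol G (S ∩ P i) : ℝ)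
          ≤ ∑ i ∈ L, d * (eB G (S ∩ P i) (P i \ S) : ℝ) := Finset.sum_le_sum hLmem
        _ = d * ∑ i ∈ L, (eB G (S ∩ P i) (P i \ S) : ℝ) := (Finset.mul_sum _ _ _).symm
        _ ≤ d * (eB G S Sᶜ : ℝ) := mul_le_mul_of_nonneg_left (hEsub L) hd0.le
    have key : φ * (vol G S : ℝ) ≤ 2 * (d * (eB G S Sᶜ : ℝ)) := by
      calc φ * (vol G S : ℝ)
          ≤ φ * (2 * ∑ i ∈ L, (vol G (S ∩ P i) : ℝ)) := mul_le_mul_of_nonneg_left hc1 hφ0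
        _ = 2 * (φ * ∑ i ∈ L, (vol G (S ∩ P i) : ℝ)) := by ring
        _ = 2 * ∑ i ∈ L, φ * (vol G (S ∩ P i) : ℝ) := by rw [Finset.mul_sum]
        _ ≤ 2 * (d * (eB G S Sᶜ : ℝ)) := by linarith
    nlinarith [mul_le_mul_of_nonneg_right hε1 (mul_nonneg hφ0 hvS0),
      mul_nonneg he0 hd0.le]
  · -- the majority of vol S lies in S-dominant parts
    push_neg at hc1
    have hRav : (vol G S : ℝ) ≤ 2 * ∑ i ∈ R, (vol G (S ∩ P i) : ℝ) := by
      have h := hLR (fun i => (vol G (S ∩ P i) : ℝ))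
      linarith [hvolS]
    by_cases hi0L : φ * (vol G (S ∩ P i0) : ℝ) ≤ d * (eB G (S ∩ P i0) (P i0 \ S) : ℝ)
    · -- Case 2a : center is internally good on the S side
      have hiR : ∀ i ∈ R, i ≠ i0 := by
        intro i hi hEq
        exact (Finset.mem_filter.mp hi).2 (by rw [hEq]; exact hi0L)
      have key : ε * ∑ i ∈ R, (vol G (S ∩ P i) : ℝ) ≤
          (vol G (S ∩ P i0) : ℝ) + ((eB G S Sᶜ : ℝ) + ∑ i ∈ R, (vol G (P i \ S) : ℝ)) := by
        calc ε * ∑ i ∈ R, (vol G (S ∩ P i) : ℝ)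
            = ∑ i ∈ R, ε * (vol G (S ∩ P i) : ℝ) := Finset.mul_sum _ _ _
          _ ≤ ∑ i ∈ R, (eB G (P i0) (P i) : ℝ) := by
              refine Finset.sum_le_sum fun i hi => ?_
              have h3i := h3 i (hiR i hi)
              have hmv : (vol G (S ∩ P i) : ℝ) ≤ (vol G (P i) : ℝ) := by
                exact_mod_cast vol_mono Finset.inter_subset_right
              calc ε * (vol G (S ∩ P i) : ℝ) ≤ ε * (vol G (P i) : ℝ) :=
                    mul_le_mul_of_nonneg_left hmv hε0
                _ ≤ (eB G (P i0) (P i) : ℝ) := h3i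
          _ = ∑ i ∈ R, (eB G (S ∩ P i0) (P i) : ℝ)
              + (∑ i ∈ R, (eB G (P i0 \ S) (S ∩ P i) : ℝ)
                + ∑ i ∈ R, (eB G (P i0 \ S) (P i \ S) : ℝ)) := by
              rw [← Finset.sum_add_distrib, ← Finset.sum_add_distrib]
              exact Finset.sum_congr rfl fun i _ => hdec i
          _ ≤ (vol G (S ∩ P i0) : ℝ) + ((eB G S Sᶜ : ℝ) + ∑ i ∈ R, (vol G (P i \ S) : ℝ)) := by
              refine add_le_add (hA0P R) (add_le_add (hcrossBA R) ?_)
              refine Finset.sum_le_sum fun i _ => ?_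
              exact_mod_cast eB_le_vol_right (P i0 \ S) (P i \ S)
      have hfin1 : φ * (vol G (S ∩ P i0) : ℝ) ≤ d * (eB G S Sᶜ : ℝ) :=
        le_trans hi0L (mul_le_mul_of_nonneg_left (hEi i0) hd0.le)
      have hfin2 : φ * ∑ i ∈ R, (vol G (P i \ S) : ℝ) ≤ d * (eB G S Sᶜ : ℝ) := by
        calc φ * ∑ i ∈ R, (vol G (P i \ S) : ℝ)
            = ∑ i ∈ R, φ * (vol G (P i \ S) : ℝ) := Finset.mul_sum _ _ _
          _ ≤ ∑ i ∈ R, d * (eB G (S ∩ P i) (P i \ S) : ℝ) := Finset.sum_le_sum hRmem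
          _ = d * ∑ i ∈ R, (eB G (S ∩ P i) (P i \ S) : ℝ) := (Finset.mul_sum _ _ _).symm
          _ ≤ d * (eB G S Sᶜ : ℝ) := mul_le_mul_of_nonneg_left (hEsub R) hd0.le
      have hφe : φ * (eB G S Sᶜ : ℝ) ≤ d * (eB G S Sᶜ : ℝ) :=
        mul_le_mul_of_nonneg_right (le_trans hφ1 hd) he0
      nlinarith [mul_le_mul_of_nonneg_left key hφ0,
        mul_le_mul_of_nonneg_left hRav (mul_nonneg hε0 hφ0)]
    · -- Case 2b : center is internally good on the Sᶜ side
      have hi0R : φ * (vol G (P i0 \ S) : ℝ) ≤ d * (eB G (S ∩ P i0) (P i0 \ S) : ℝ) :=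
        (hF3 i0).resolve_left hi0L
      by_cases hc2 : (vol G S : ℝ) ≤ 2 * ∑ i ∈ R, (vol G (P i \ S) : ℝ)
      · -- like case 1, on the complement side
        have step : ∑ i ∈ R, φ * (vol G (P i \ S) : ℝ) ≤ d * (eB G S Sᶜ : ℝ) := by
          calc ∑ i ∈ R, φ * (vol G (P i \ S) : ℝ)
              ≤ ∑ i ∈ R, d * (eB G (S ∩ P i) (P i \ S) : ℝ) := Finset.sum_le_sum hRmem
            _ = d * ∑ i ∈ R, (eB G (S ∩ P i) (P i \ S) : ℝ) := (Finset.mul_sum _ _ _).symm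
            _ ≤ d * (eB G S Sᶜ : ℝ) := mul_le_mul_of_nonneg_left (hEsub R) hd0.le
        have key : φ * (vol G S : ℝ) ≤ 2 * (d * (eB G S Sᶜ : ℝ)) := by
          calc φ * (vol G S : ℝ)
              ≤ φ * (2 * ∑ i ∈ R, (vol G (P i \ S) : ℝ)) := mul_le_mul_of_nonneg_left hc2 hφ0
            _ = 2 * (φ * ∑ i ∈ R, (vol G (P i \ S) : ℝ)) := by ring
            _ = 2 * ∑ i ∈ R, φ * (vol G (P i \ S) : ℝ) := by rw [Finset.mul_sum]
            _ ≤ 2 * (d * (eB G S Sᶜ : ℝ)) := by linarith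
        nlinarith [mul_le_mul_of_nonneg_right hε1 (mul_nonneg hφ0 hvS0),
          mul_nonneg he0 hd0.le]
      · push_neg at hc2
        have hLbv : (vol G S : ℝ) ≤ 2 * ∑ i ∈ L, (vol G (P i \ S) : ℝ) := by
          have h := hLR (fun i => (vol G (P i \ S) : ℝ))
          linarith [hvolSc]
        have hiL : ∀ i ∈ L, i ≠ i0 := by
          intro i hi hEq
          exact hi0L (by rw [← hEq]; exact (Finset.mem_filter.mp hi).2)
        have key : ε * ∑ i ∈ L, (vol G (P i \ S) : ℝ) ≤
            (∑ i ∈ L, (vol G (S ∩ P i) : ℝ) + (eB G S Sᶜ : ℝ)) + (vol G (P i0 \ S) : ℝ) := by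
          calc ε * ∑ i ∈ L, (vol G (P i \ S) : ℝ)
              = ∑ i ∈ L, ε * (vol G (P i \ S) : ℝ) := Finset.mul_sum _ _ _
            _ ≤ ∑ i ∈ L, (eB G (P i0) (P i) : ℝ) := by
                refine Finset.sum_le_sum fun i hi => ?_
                have h3i := h3 i (hiL i hi)
                have hmv : (vol G (P i \ S) : ℝ) ≤ (vol G (P i) : ℝ) := by
                  exact_mod_cast vol_mono (Finset.sdiff_subset)
                calc ε * (vol G (P i \ S) : ℝ) ≤ ε * (vol G (P i) : ℝ) :=
                      mul_le_mul_of_nonneg_left hmv hε0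
                  _ ≤ (eB G (P i0) (P i) : ℝ) := h3i
            _ = (∑ i ∈ L, (eB G (S ∩ P i0) (S ∩ P i) : ℝ)
                + ∑ i ∈ L, (eB G (S ∩ P i0) (P i \ S) : ℝ))
                + ∑ i ∈ L, (eB G (P i0 \ S) (P i) : ℝ) := by
                rw [← Finset.sum_add_distrib, ← Finset.sum_add_distrib]
                exact Finset.sum_congr rfl fun i _ => hdec2 i
            _ ≤ (∑ i ∈ L, (vol G (S ∩ P i) : ℝ) + (eB G S Sᶜ : ℝ)) + (vol G (P i0 \ S) : ℝ) := by
                refine add_le_add (add_le_add ?_ (hcrossAB L)) (hB0P L)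
                refine Finset.sum_le_sum fun i _ => ?_
                exact_mod_cast eB_le_vol_right (S ∩ P i0) (S ∩ P i)
        have hfin1 : φ * (vol G (P i0 \ S) : ℝ) ≤ d * (eB G S Sᶜ : ℝ) :=
          le_trans hi0R (mul_le_mul_of_nonneg_left (hEi i0) hd0.le)
        have hfin2 : φ * ∑ i ∈ L, (vol G (S ∩ P i) : ℝ) ≤ d * (eB G S Sᶜ : ℝ) := by
          calc φ * ∑ i ∈ L, (vol G (S ∩ P i) : ℝ)
              = ∑ i ∈ L, φ * (vol G (S ∩ P i) : ℝ) := Finset.mul_sum _ _ _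
            _ ≤ ∑ i ∈ L, d * (eB G (S ∩ P i) (P i \ S) : ℝ) := Finset.sum_le_sum hLmem
            _ = d * ∑ i ∈ L, (eB G (S ∩ P i) (P i \ S) : ℝ) := (Finset.mul_sum _ _ _).symm
            _ ≤ d * (eB G S Sᶜ : ℝ) := mul_le_mul_of_nonneg_left (hEsub L) hd0.le
        have hφe : φ * (eB G S Sᶜ : ℝ) ≤ d * (eB G S Sᶜ : ℝ) :=
          mul_le_mul_of_nonneg_right (le_trans hφ1 hd) he0
        nlinarith [mul_le_mul_of_nonneg_left key hφ0,
          mul_le_mul_of_nonneg_left hLbv (mul_nonneg hε0 hφ0)]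

/-- Let `G = (V,E)` be a graph and `V = V₁ ∪ ... ∪ V_k` a partition such that
(1) each part is a singleton or induces a `φ`-expander (conductance in the induced
subgraph, stated multiplicatively), (2) for each part with more than one vertex,
every vertex `v` of the part has at least `deg(v)/d` of its edges inside the part,
and (3) every part other than `V₁` receives at least `ε · vol(V_i)` edges from
`V₁`.  Then `G` is a `φ'`-expander with `φ' = εφ/(6d)`: every nonempty proper cut
`(S, V \ S)` satisfies `|E(S, V\S)| ≥ (εφ/(6d)) · min(vol S, vol Sᶜ)`. -/
theorem stmt2 {V : Type*} [Fintype V] [DecidableEq V]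
    (G : SimpleGraph V) [DecidableRel G.Adj]
    (ε φ d : ℝ) (hε0 : 0 ≤ ε) (hε1 : ε ≤ 1) (hφ0 : 0 ≤ φ) (hφ1 : φ ≤ 1) (hd : 1 ≤ d)
    (k : ℕ) (hk : 0 < k) (P : Fin k → Finset V)
    (hdisj : ∀ i j, i ≠ j → Disjoint (P i) (P j))
    (hcover : ∀ v : V, ∃ i, v ∈ P i)
    (h1 : ∀ i, (P i).card = 1 ∨
      ∀ S ⊆ P i, S.Nonempty → S ≠ P i →
        φ * min (∑ v ∈ S, (eB G {v} (P i) : ℝ)) (∑ v ∈ P i \ S, (eB G {v} (P i) : ℝ))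
          ≤ (eB G S (P i \ S) : ℝ))
    (h2 : ∀ i, 1 < (P i).card → ∀ v ∈ P i,
      (G.degree v : ℝ) ≤ d * (eB G {v} (P i) : ℝ))
    (h3 : ∀ i, i ≠ (⟨0, hk⟩ : Fin k) →
      ε * (vol G (P i) : ℝ) ≤ (eB G (P ⟨0, hk⟩) (P i) : ℝ)) :
    ∀ S : Finset V, S.Nonempty → S ≠ Finset.univ →
      ε * φ / (6 * d) * min (vol G S : ℝ) (vol G Sᶜ : ℝ) ≤ (eB G S Sᶜ : ℝ) := by
  intro S _ _
  rcases le_total (vol G S) (vol G Sᶜ) with h | h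
  · rw [min_eq_left (by exact_mod_cast h)]
    exact aux G ε φ d hε0 hε1 hφ0 hφ1 hd k hk P hdisj hcover h1 h2 h3 S h
  · rw [min_eq_right (by exact_mod_cast h)]
    have h' : vol G Sᶜ ≤ vol G Sᶜᶜ := by rw [compl_compl]; exact h
    have hres := aux G ε φ d hε0 hε1 hφ0 hφ1 hd k hk P hdisj hcover h1 h2 h3 Sᶜ h'
    rw [compl_compl, eB_comm Sᶜ S] at hres
    exact hres
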